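/- Let S and A be finite nonempty types, let n and T be natural numbers with T ≥ 1, and let θ ∈ ℝⁿ. Let μ : S → ℝ be an initial distribution (nonnegative, summing to 1), let p : S → A → S → ℝ be a transition kernel (p(s, a, ·) nonnegative and summing to 1 for every s, a), and let π : ℝⁿ → S → A → ℝ be a policy such that for each (s, a) the map θ' ↦ π(θ', s, a) is differentiable at θ, π(θ', s, a) > 0 and Σ_{a} π(θ', s, a) = 1 for all s and all θ' in a neighborhood of θ. For a trajectory τ = (s₀, a₀, …, s_{T−1}, a_{T−1}, s_T) ∈ (S × A)^T × S define P(θ', τ) := μ(s₀) · ∏_{t=0}^{T−1} π(θ', s_t, a_t) · p(s_t, a_t, s_{t+1}), and for a reward function r : S → A → ℝ and discount γ ∈ ℝ define the return R(τ) := Σ_{t=0}^{T−1} γ^t · r(s_t, a_t). Define J(θ') := Σ_τ P(θ', τ) · R(τ). Then J is differentiable at θ and ∇_θ J(θ) = Σ_τ P(θ, τ) · R(τ) · ( Σ_{t=0}^{T−1} ∇_θ log π(θ, s_t, a_t) ). -/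

import Mathlib

/-!
Log-derivative trick: the trajectory probability is a product of policy factors `π θ' s_t a_t`
and of factors `μ s₀`, `p s_t a_t s_{t+1}` that do not depend on `θ'`. By the product rule the
derivative of a product of nonvanishing factors is the product times the sum of the logarithmic
derivatives of the factors, so each summand `P θ' τ * R τ` of `J` has derivative
`(P θ τ * R τ) • ∑ t, ∇ log π(θ, s_t, a_t)`, and `J` is a finite sum of such terms.
-/

open Finset

section LogDeriv

variable {E : Type*} [NormedAddCommGroup E] [NormedSpace ℝ E]

theorem hasFDerivAt_finsetProd_eq_smul_sum_fderiv_log {ι : Type*} (s : Finset ι)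
    {f : ι → E → ℝ} {x : E} (hdiff : ∀ i ∈ s, DifferentiableAt ℝ (f i) x)
    (hne : ∀ i ∈ s, f i x ≠ 0) :
    HasFDerivAt (fun y => ∏ i ∈ s, f i y)
      ((∏ i ∈ s, f i x) • ∑ i ∈ s, fderiv ℝ (fun y => Real.log (f i y)) x) x := by
  classical
  refine (HasFDerivAt.finsetProd fun i hi => (hdiff i hi).hasFDerivAt).congr_fderiv ?_
  rw [smul_sum]
  refine sum_congr rfl fun i hi => ?_
  rw [fderiv.log (hdiff i hi) (hne i hi), smul_smul, ← mul_prod_erase s _ hi,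
    mul_comm (f i x), mul_assoc, mul_inv_cancel₀ (hne i hi), mul_one]

theorem hasFDerivAt_const_mul_prod_eq_smul_sum_fderiv_log {ι : Type*} [Fintype ι] (c : ℝ)
    {f : ι → E → ℝ} {x : E} (hdiff : ∀ i, DifferentiableAt ℝ (f i) x) (hne : ∀ i, f i x ≠ 0) :
    HasFDerivAt (fun y => c * ∏ i, f i y)
      ((c * ∏ i, f i x) • ∑ i, fderiv ℝ (fun y => Real.log (f i y)) x) x := by
  rw [mul_smul]
  exact (hasFDerivAt_finsetProd_eq_smul_sum_fderiv_log univ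
    (fun i _ => hdiff i) (fun i _ => hne i)).const_mul c

end LogDeriv

theorem policy_gradient_theorem_finite_mdp_general
    {S A : Type*} [Fintype S] [Fintype A]
    {n T : ℕ} (hT : 1 ≤ T) (θ : Fin n → ℝ)
    (μ : S → ℝ)
    (p : S → A → S → ℝ)
    (π : (Fin n → ℝ) → S → A → ℝ)
    (hπ_diff : ∀ (s : S) (a : A), DifferentiableAt ℝ (fun θ' => π θ' s a) θ)
    (hπ_pos : ∀ᶠ θ' in nhds θ, ∀ (s : S) (a : A), 0 < π θ' s a)
    -- the next state after step `t` : the state of step `t+1`, or the final state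
    (nxt : ((Fin T → S × A) × S) → Fin T → S)
    (P : (Fin n → ℝ) → ((Fin T → S × A) × S) → ℝ)
    (hP : ∀ θ' (τ : (Fin T → S × A) × S),
      P θ' τ = μ (τ.1 ⟨0, hT⟩).1 *
        ∏ t : Fin T, (π θ' (τ.1 t).1 (τ.1 t).2 * p (τ.1 t).1 (τ.1 t).2 (nxt τ t)))
    (R : ((Fin T → S × A) × S) → ℝ)
    (J : (Fin n → ℝ) → ℝ)
    (hJ : ∀ θ', J θ' = ∑ τ : (Fin T → S × A) × S, P θ' τ * R τ) :
    DifferentiableAt ℝ J θ ∧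
      fderiv ℝ J θ =
        ∑ τ : (Fin T → S × A) × S, (P θ τ * R τ) •
          ∑ t : Fin T,
            fderiv ℝ (fun θ' => Real.log (π θ' (τ.1 t).1 (τ.1 t).2)) θ := by
  have hπ_ne : ∀ s a, π θ s a ≠ 0 := fun s a => (hπ_pos.self_of_nhds s a).ne'
  have hsplit : ∀ θ' τ, P θ' τ * R τ =
      (μ (τ.1 ⟨0, hT⟩).1 * (∏ t, p (τ.1 t).1 (τ.1 t).2 (nxt τ t)) * R τ) *
        ∏ t, π θ' (τ.1 t).1 (τ.1 t).2 := by
    intro θ' τ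
    rw [hP, prod_mul_distrib]
    ring
  have hJ_deriv : HasFDerivAt J (∑ τ : (Fin T → S × A) × S, (P θ τ * R τ) •
      ∑ t : Fin T, fderiv ℝ (fun θ' => Real.log (π θ' (τ.1 t).1 (τ.1 t).2)) θ) θ := by
    rw [funext hJ]
    refine HasFDerivAt.fun_sum fun τ _ => ?_
    simp only [hsplit]
    exact hasFDerivAt_const_mul_prod_eq_smul_sum_fderiv_log _ (fun t => hπ_diff _ _)
      (fun t => hπ_ne _ _)
  exact ⟨hJ_deriv.differentiableAt, hJ_deriv.fderiv⟩

/-- Policy Gradient Theorem for a finite episodic MDP with horizon `T ≥ 1`: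
for trajectories `τ = ((s₀,a₀),…,(s_{T-1},a_{T-1}), s_T)` with probability
`P θ' τ = μ s₀ * ∏ t, π θ' (s_t) (a_t) * p (s_t) (a_t) (s_{t+1})` and return
`R τ = ∑ t, γ^t * r (s_t) (a_t)`, the objective `J θ' = ∑ τ, P θ' τ * R τ` is
differentiable at `θ` and its gradient is the expectation of the return weighted
by the sum of the per-step policy scores. -/
theorem policy_gradient_theorem_finite_mdp
    {S A : Type*} [Fintype S] [Nonempty S] [Fintype A] [Nonempty A]
    {n T : ℕ} (hT : 1 ≤ T) (θ : Fin n → ℝ)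
    (μ : S → ℝ) (hμ_nonneg : ∀ s : S, 0 ≤ μ s) (hμ_sum : ∑ s : S, μ s = 1)
    (p : S → A → S → ℝ)
    (hp_nonneg : ∀ s a s', 0 ≤ p s a s') (hp_sum : ∀ s a, ∑ s' : S, p s a s' = 1)
    (π : (Fin n → ℝ) → S → A → ℝ)
    (hπ_diff : ∀ (s : S) (a : A), DifferentiableAt ℝ (fun θ' => π θ' s a) θ)
    (hπ_pos : ∀ᶠ θ' in nhds θ, ∀ (s : S) (a : A), 0 < π θ' s a)
    (hπ_sum : ∀ᶠ θ' in nhds θ, ∀ s : S, ∑ a : A, π θ' s a = 1)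
    (r : S → A → ℝ) (γ : ℝ)
    -- the next state after step `t` : the state of step `t+1`, or the final state
    (nxt : ((Fin T → S × A) × S) → Fin T → S)
    (hnxt : ∀ (τ : (Fin T → S × A) × S) (t : Fin T),
      nxt τ t = if h : (t : ℕ) + 1 < T then (τ.1 ⟨(t : ℕ) + 1, h⟩).1 else τ.2)
    (P : (Fin n → ℝ) → ((Fin T → S × A) × S) → ℝ)
    (hP : ∀ θ' (τ : (Fin T → S × A) × S),
      P θ' τ = μ (τ.1 ⟨0, hT⟩).1 *
        ∏ t : Fin T, (π θ' (τ.1 t).1 (τ.1 t).2 * p (τ.1 t).1 (τ.1 t).2 (nxt τ t)))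
    (R : ((Fin T → S × A) × S) → ℝ)
    (hR : ∀ τ : (Fin T → S × A) × S,
      R τ = ∑ t : Fin T, γ ^ (t : ℕ) * r (τ.1 t).1 (τ.1 t).2)
    (J : (Fin n → ℝ) → ℝ)
    (hJ : ∀ θ', J θ' = ∑ τ : (Fin T → S × A) × S, P θ' τ * R τ) :
    DifferentiableAt ℝ J θ ∧
      fderiv ℝ J θ =
        ∑ τ : (Fin T → S × A) × S, (P θ τ * R τ) •
          ∑ t : Fin T,
            fderiv ℝ (fun θ' => Real.log (π θ' (τ.1 t).1 (τ.1 t).2)) θ :=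
  policy_gradient_theorem_finite_mdp_general hT θ μ p π hπ_diff hπ_pos nxt P hP R J hJ
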